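/- arXiv:1812.04112 — 4 statements merged into one kernel-verified Lean document; each statement's English description precedes it below -/
import Mathlib

section
/- Fix T > 0 and let K be the set of all functions x : [0,∞) → ℝ such that x is nondecreasing, x(0) = 0, x is left-continuous at every t > 0, 0 ≤ x(t) ≤ 1 for all t, and x is constant on (T,∞). Then K is convex, and the set of extreme points of K (with respect to the real vector space of functions [0,∞) → ℝ) is exactly {x ∈ K : x(t) ∈ {0,1} for all t}. -/
open Set NNReal

/-!
Membership in `K` is preserved by post-composition with any monotone continuous `φ : ℝ → ℝ`
fixing `0` and mapping `[0,1]` into itself. A `{0,1}`-valued element of `K` is an extreme point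
of the whole cube `[0,1]^ℝ≥0`, hence of `K`. Conversely, if `s = x t ∈ (0,1)`, then
`x = s • (min x s / s) + (1 - s) • ((x - s)⁺ / (1 - s))` with both pieces in `K`,
and the first piece equals `1 ≠ x t` at `t`, so `x` is not extreme.
-/

namespace RandomizedStoppingTime

noncomputable def lowerPart (s a : ℝ) : ℝ := min a s / s

noncomputable def upperPart (s a : ℝ) : ℝ := max (a - s) 0 / (1 - s)

theorem lowerPart_self {s : ℝ} (hs : s ≠ 0) : lowerPart s s = 1 := by
  simp [lowerPart, hs]

theorem monotone_lowerPart {s : ℝ} (hs : 0 ≤ s) : Monotone (lowerPart s) :=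
  fun _ _ hab ↦ div_le_div_of_nonneg_right (min_le_min_right s hab) hs

theorem monotone_upperPart {s : ℝ} (hs : s ≤ 1) : Monotone (upperPart s) :=
  fun _ _ hab ↦ div_le_div_of_nonneg_right (max_le_max_right 0 (by linarith)) (by linarith)

theorem continuous_lowerPart (s : ℝ) : Continuous (lowerPart s) := by
  unfold lowerPart; fun_prop

theorem continuous_upperPart (s : ℝ) : Continuous (upperPart s) := by
  unfold upperPart; fun_prop

theorem lowerPart_zero {s : ℝ} (hs : 0 ≤ s) : lowerPart s 0 = 0 := by
  simp [lowerPart, hs]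

theorem upperPart_zero {s : ℝ} (hs : 0 ≤ s) : upperPart s 0 = 0 := by
  simp [upperPart, hs]

theorem mapsTo_lowerPart {s : ℝ} (hs : 0 < s) : MapsTo (lowerPart s) (Icc 0 1) (Icc 0 1) :=
  fun a ha ↦ ⟨div_nonneg (le_min ha.1 hs.le) hs.le, div_le_one_of_le₀ (min_le_right a s) hs.le⟩

theorem mapsTo_upperPart {s : ℝ} (hs : s < 1) : MapsTo (upperPart s) (Icc 0 1) (Icc 0 1) :=
  fun a ha ↦ ⟨div_nonneg (le_max_right _ _) (by linarith),
    div_le_one_of_le₀ (max_le (by linarith [ha.2]) (by linarith)) (by linarith)⟩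

theorem mul_lowerPart_add_mul_upperPart {s : ℝ} (hs₀ : s ≠ 0) (hs₁ : s ≠ 1) (a : ℝ) :
    s * lowerPart s a + (1 - s) * upperPart s a = a := by
  rw [lowerPart, upperPart, mul_div_cancel₀ _ hs₀, mul_div_cancel₀ _ (sub_ne_zero.2 hs₁.symm)]
  rcases le_total a s with h | h
  · rw [min_eq_left h, max_eq_right (by linarith), add_zero]
  · rw [min_eq_right h, max_eq_left (by linarith), add_sub_cancel]

theorem mem_openSegment_lowerPart_upperPart {ι : Type*} {s : ℝ} (hs : s ∈ Ioo 0 1)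
    (x : ι → ℝ) : x ∈ openSegment ℝ (lowerPart s ∘ x) (upperPart s ∘ x) :=
  ⟨s, 1 - s, hs.1, sub_pos.2 hs.2, add_sub_cancel s 1, funext fun i ↦
    mul_lowerPart_add_mul_upperPart hs.1.ne' hs.2.ne (x i)⟩

theorem extremePoints_eq_of_subset_pi_Icc {ι : Type*} {K : Set (ι → ℝ)}
    (hK : K ⊆ univ.pi fun _ ↦ Icc 0 1)
    (hsplit : ∀ x ∈ K, ∀ s ∈ Ioo (0 : ℝ) 1, lowerPart s ∘ x ∈ K ∧ upperPart s ∘ x ∈ K) :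
    extremePoints ℝ K = {x ∈ K | ∀ i, x i = 0 ∨ x i = 1} := by
  ext x
  refine ⟨fun hx ↦ ⟨hx.1, fun i ↦ ?_⟩, fun ⟨hxK, hx01⟩ ↦ ?_⟩
  · by_contra! hxi
    have hs : x i ∈ Ioo 0 1 :=
      ⟨(hK hx.1 i trivial).1.lt_of_ne' hxi.1, (hK hx.1 i trivial).2.lt_of_ne hxi.2⟩
    obtain ⟨hlower, hupper⟩ := hsplit x hx.1 (x i) hs
    have hx_eq : lowerPart (x i) ∘ x = x :=
      hx.2 hlower hupper (mem_openSegment_lowerPart_upperPart hs x)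
    have := congrFun hx_eq i
    rw [Function.comp_apply, lowerPart_self hs.1.ne'] at this
    exact hs.2.ne' this
  · refine inter_extremePoints_subset_extremePoints_of_subset hK ⟨hxK, ?_⟩
    rw [extremePoints_pi, extremePoints_Icc zero_le_one]
    exact fun i _ ↦ hx01 i

def paths (T : ℝ≥0) : Set (ℝ≥0 → ℝ) :=
  {x : ℝ≥0 → ℝ |
      Monotone x ∧ x 0 = 0 ∧
      (∀ t : ℝ≥0, 0 < t → ContinuousWithinAt x (Set.Iio t) t) ∧
      (∀ t : ℝ≥0, x t ∈ Set.Icc (0:ℝ) 1) ∧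
      (∀ s t : ℝ≥0, T < s → T < t → x s = x t)}

theorem convex_paths (T : ℝ≥0) : Convex ℝ (paths T) := by
  rintro x ⟨hxm, hx0, hxl, hxI, hxc⟩ y ⟨hym, hy0, hyl, hyI, hyc⟩ a b ha hb hab
  simp only [paths, mem_ofPred_eq, Pi.add_apply, Pi.smul_apply, smul_eq_mul]
  refine ⟨fun u v huv ↦ ?_, by simp [hx0, hy0], fun t ht ↦ ?_, fun t ↦ ?_,
    fun u v hu hv ↦ by rw [hxc u v hu hv, hyc u v hu hv]⟩
  · exact add_le_add (mul_le_mul_of_nonneg_left (hxm huv) ha)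
      (mul_le_mul_of_nonneg_left (hym huv) hb)
  · exact (continuousWithinAt_const.mul (hxl t ht)).add (continuousWithinAt_const.mul (hyl t ht))
  · obtain ⟨hx0, hx1⟩ := hxI t
    obtain ⟨hy0, hy1⟩ := hyI t
    constructor <;> nlinarith

theorem comp_mem_paths {T : ℝ≥0} {φ : ℝ → ℝ} (hmono : Monotone φ) (hcont : Continuous φ)
    (hzero : φ 0 = 0) (hmaps : MapsTo φ (Icc 0 1) (Icc 0 1)) {x : ℝ≥0 → ℝ} (hx : x ∈ paths T) :
    φ ∘ x ∈ paths T := by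
  obtain ⟨hxm, hx0, hxl, hxI, hxc⟩ := hx
  exact ⟨hmono.comp hxm, by simp [hx0, hzero],
    fun t ht ↦ hcont.continuousAt.comp_continuousWithinAt (hxl t ht), fun t ↦ hmaps (hxI t),
    fun u v hu hv ↦ by simp [hxc u v hu hv]⟩

theorem lowerPart_comp_mem_paths {T : ℝ≥0} {s : ℝ} (hs : 0 < s) {x : ℝ≥0 → ℝ}
    (hx : x ∈ paths T) : lowerPart s ∘ x ∈ paths T :=
  comp_mem_paths (monotone_lowerPart hs.le) (continuous_lowerPart s) (lowerPart_zero hs.le)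
    (mapsTo_lowerPart hs) hx

theorem upperPart_comp_mem_paths {T : ℝ≥0} {s : ℝ} (hs : s ∈ Ico 0 1) {x : ℝ≥0 → ℝ}
    (hx : x ∈ paths T) : upperPart s ∘ x ∈ paths T :=
  comp_mem_paths (monotone_upperPart hs.2.le) (continuous_upperPart s) (upperPart_zero hs.1)
    (mapsTo_upperPart hs.2) hx

theorem paths_subset_pi_Icc (T : ℝ≥0) : paths T ⊆ univ.pi fun _ ↦ Icc 0 1 :=
  fun _ hx t _ ↦ hx.2.2.2.1 t

end RandomizedStoppingTime

open RandomizedStoppingTime in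
theorem extremePoints_randomized_stopping_times_general
    (T : ℝ≥0) (K : Set (ℝ≥0 → ℝ))
    (hK : K = {x : ℝ≥0 → ℝ |
      Monotone x ∧ x 0 = 0 ∧
      (∀ t : ℝ≥0, 0 < t → ContinuousWithinAt x (Set.Iio t) t) ∧
      (∀ t : ℝ≥0, x t ∈ Set.Icc (0:ℝ) 1) ∧
      (∀ s t : ℝ≥0, T < s → T < t → x s = x t)}) :
    Convex ℝ K ∧
      Set.extremePoints ℝ K = {x ∈ K | ∀ t : ℝ≥0, x t = 0 ∨ x t = 1} := by
  subst hK
  exact ⟨convex_paths T, extremePoints_eq_of_subset_pi_Icc (paths_subset_pi_Icc T) fun _ hx _ hs ↦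
    ⟨lowerPart_comp_mem_paths hs.1 hx, upperPart_comp_mem_paths (Ioo_subset_Ico_self hs) hx⟩⟩

/-- The set of "paths of randomized stopping times": nondecreasing, left-continuous
functions `x : [0,∞) → ℝ` with `x 0 = 0`, `0 ≤ x t ≤ 1`, constant on `(T,∞)`,
is convex and its extreme points are exactly its `{0,1}`-valued elements. -/
theorem extremePoints_randomized_stopping_times
    (T : ℝ≥0) (hT : 0 < T) (K : Set (ℝ≥0 → ℝ))
    (hK : K = {x : ℝ≥0 → ℝ |
      Monotone x ∧ x 0 = 0 ∧
      (∀ t : ℝ≥0, 0 < t → ContinuousWithinAt x (Set.Iio t) t) ∧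
      (∀ t : ℝ≥0, x t ∈ Set.Icc (0:ℝ) 1) ∧
      (∀ s t : ℝ≥0, T < s → T < t → x s = x t)}) :
    Convex ℝ K ∧
      Set.extremePoints ℝ K = {x ∈ K | ∀ t : ℝ≥0, x t = 0 ∨ x t = 1} :=
  extremePoints_randomized_stopping_times_general T K hK
end

section
/- Fix T > 0 and let K̂ be the set of all functions x : [0,∞) → ℝ such that x is nondecreasing, x(0) = 0, 0 ≤ x(t) ≤ 1 for all t, and x is constant on (T,∞) (no left- or right-continuity is assumed). Then K̂ is convex, and the set of extreme points of K̂ (with respect to the real vector space of functions [0,∞) → ℝ) is exactly {x ∈ K̂ : x(t) ∈ {0,1} for all t}. -/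
open Set NNReal

section ZeroOneValued

variable {α : Type*} {K : Set (α → ℝ)}

theorem mem_extremePoints_of_forall_eq_zero_or_one (hK : K ⊆ univ.pi fun _ ↦ Icc 0 1)
    {x : α → ℝ} (hxK : x ∈ K) (hx : ∀ t, x t = 0 ∨ x t = 1) : x ∈ extremePoints ℝ K := by
  refine inter_extremePoints_subset_extremePoints_of_subset hK ⟨hxK, ?_⟩
  rw [extremePoints_pi]
  intro t _
  rw [extremePoints_Icc zero_le_one]
  exact hx t

theorem min_two_mul_one_eq_self_iff {c : ℝ} : min (2 * c) 1 = c ↔ c = 0 ∨ c = 1 := by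
  constructor
  · intro h
    rcases min_choice (2 * c) 1 with h' | h' <;> rw [h'] at h
    · exact .inl (by linarith)
    · exact .inr h.symm
  · rintro (rfl | rfl) <;> norm_num

theorem min_two_mul_one_add_max_two_mul_sub_one_zero (c : ℝ) :
    min (2 * c) 1 + max (2 * c - 1) 0 = 2 * c := by
  rcases le_total (2 * c) 1 with h | h
  · rw [min_eq_left h, max_eq_right (by linarith)]; ring
  · rw [min_eq_right h, max_eq_left (by linarith)]; ring

/-- Every `x` is the midpoint of `min (2 x) 1` and `max (2 x - 1) 0`, and the first of these
moves every value of `x` other than `0` and `1`. -/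
theorem forall_eq_zero_or_one_of_mem_extremePoints
    (hφ : ∀ x ∈ K, (fun c ↦ min (2 * c) 1) ∘ x ∈ K)
    (hψ : ∀ x ∈ K, (fun c ↦ max (2 * c - 1) 0) ∘ x ∈ K)
    {x : α → ℝ} (hx : x ∈ extremePoints ℝ K) (t : α) : x t = 0 ∨ x t = 1 := by
  have hmid :
      x ∈ openSegment ℝ ((fun c ↦ min (2 * c) 1) ∘ x) ((fun c ↦ max (2 * c - 1) 0) ∘ x) := by
    refine ⟨1 / 2, 1 / 2, by norm_num, by norm_num, by norm_num, funext fun s ↦ ?_⟩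
    have := min_two_mul_one_add_max_two_mul_sub_one_zero (x s)
    simp only [Pi.add_apply, Pi.smul_apply, Function.comp_apply, smul_eq_mul]
    linarith
  have hfix := hx.2 (hφ x hx.1) (hψ x hx.1) hmid
  exact min_two_mul_one_eq_self_iff.1 (congrFun hfix t)

theorem extremePoints_eq_setOf_forall_eq_zero_or_one (hK : K ⊆ univ.pi fun _ ↦ Icc 0 1)
    (hφ : ∀ x ∈ K, (fun c ↦ min (2 * c) 1) ∘ x ∈ K)
    (hψ : ∀ x ∈ K, (fun c ↦ max (2 * c - 1) 0) ∘ x ∈ K) :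
    extremePoints ℝ K = {x ∈ K | ∀ t, x t = 0 ∨ x t = 1} :=
  Subset.antisymm
    (fun _ hx ↦ ⟨hx.1, forall_eq_zero_or_one_of_mem_extremePoints hφ hψ hx⟩)
    (fun _ ⟨hxK, hx⟩ ↦ mem_extremePoints_of_forall_eq_zero_or_one hK hxK hx)

end ZeroOneValued

/-- The paper's `K̂`: paths of relaxed quasi-stopping times with horizon `T`. -/
def relaxedQuasiStoppingTimes (T : ℝ≥0) : Set (ℝ≥0 → ℝ) :=
  {x | Monotone x ∧ x 0 = 0 ∧ (∀ t, x t ∈ Icc (0 : ℝ) 1) ∧ ∀ s t, T < s → T < t → x s = x t}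

namespace relaxedQuasiStoppingTimes

variable {T : ℝ≥0}

theorem subset_pi_Icc : relaxedQuasiStoppingTimes T ⊆ univ.pi fun _ ↦ Icc 0 1 :=
  fun _ hx t _ ↦ hx.2.2.1 t

theorem convex : Convex ℝ (relaxedQuasiStoppingTimes T) := by
  rintro x ⟨hxm, hx0, hxI, hxc⟩ y ⟨hym, hy0, hyI, hyc⟩ a b ha hb hab
  refine ⟨(hxm.const_smul ha).add (hym.const_smul hb), by simp [hx0, hy0],
    fun t ↦ convex_Icc 0 1 (hxI t) (hyI t) ha hb hab, fun s t hs ht ↦ ?_⟩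
  simp [hxc s t hs ht, hyc s t hs ht]

theorem comp_mem {φ : ℝ → ℝ} (hφ : Monotone φ) (hφ0 : φ 0 = 0)
    (hφI : MapsTo φ (Icc 0 1) (Icc 0 1)) {x : ℝ≥0 → ℝ} (hx : x ∈ relaxedQuasiStoppingTimes T) :
    φ ∘ x ∈ relaxedQuasiStoppingTimes T :=
  ⟨hφ.comp hx.1, by simp [hx.2.1, hφ0], fun t ↦ hφI (hx.2.2.1 t),
    fun s t hs ht ↦ by simp [hx.2.2.2 s t hs ht]⟩

theorem extremePoints_eq :
    extremePoints ℝ (relaxedQuasiStoppingTimes T) =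
      {x ∈ relaxedQuasiStoppingTimes T | ∀ t, x t = 0 ∨ x t = 1} := by
  refine extremePoints_eq_setOf_forall_eq_zero_or_one subset_pi_Icc
    (fun x ↦ comp_mem ?_ (by norm_num) ?_) (fun x ↦ comp_mem ?_ (by norm_num) ?_)
  · exact fun _ _ h ↦ by gcongr
  · rintro c ⟨h0, -⟩
    exact ⟨le_min (by linarith) zero_le_one, min_le_right _ _⟩
  · exact fun _ _ h ↦ by gcongr
  · rintro c ⟨-, h1⟩
    exact ⟨le_max_right _ _, max_le (by linarith) zero_le_one⟩

end relaxedQuasiStoppingTimes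

theorem extremePoints_relaxed_quasi_stopping_times_general
    (T : ℝ≥0) (K : Set (ℝ≥0 → ℝ))
    (hK : K = {x : ℝ≥0 → ℝ |
      Monotone x ∧ x 0 = 0 ∧
      (∀ t : ℝ≥0, x t ∈ Set.Icc (0:ℝ) 1) ∧
      (∀ s t : ℝ≥0, T < s → T < t → x s = x t)}) :
    Convex ℝ K ∧
      Set.extremePoints ℝ K = {x ∈ K | ∀ t : ℝ≥0, x t = 0 ∨ x t = 1} := by
  subst hK
  exact ⟨relaxedQuasiStoppingTimes.convex, relaxedQuasiStoppingTimes.extremePoints_eq⟩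

/-- The set of "paths of relaxed quasi-stopping times": nondecreasing functions
`x : [0,∞) → ℝ` with `x 0 = 0`, `0 ≤ x t ≤ 1`, constant on `(T,∞)` (no one-sided
continuity assumed), is convex and its extreme points are exactly its
`{0,1}`-valued elements. -/
theorem extremePoints_relaxed_quasi_stopping_times
    (T : ℝ≥0) (hT : 0 < T) (K : Set (ℝ≥0 → ℝ))
    (hK : K = {x : ℝ≥0 → ℝ |
      Monotone x ∧ x 0 = 0 ∧
      (∀ t : ℝ≥0, x t ∈ Set.Icc (0:ℝ) 1) ∧
      (∀ s t : ℝ≥0, T < s → T < t → x s = x t)}) :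
    Convex ℝ K ∧
      Set.extremePoints ℝ K = {x ∈ K | ∀ t : ℝ≥0, x t = 0 ∨ x t = 1} :=
  extremePoints_relaxed_quasi_stopping_times_general T K hK
end

section
/- Let (Ω, F, (F_t)_{t∈[0,T]}, P) be a filtered probability space with finite horizon T > 0 satisfying the usual conditions (the filtration is right-continuous and F_0 contains all P-null sets). Let R be an adapted real-valued process on [0,T] with continuous paths which is of class (D), i.e. the family {R_τ : τ a stopping time with values in [0,T]} is uniformly integrable. Then there exists a stopping time τ* with values in [0,T] such that E[R_{τ*}] = sup_τ E[R_τ], the supremum being over all stopping times τ with values in [0,T]. -/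
/-!
Let `V = sup_τ E[R_τ]` and pick stopping times `τ n` with `E[R_{τ n}] > V - 2⁻ⁿ`. Since
`R_{a ⊓ b} + R_{a ⊔ b} = R_a + R_b` and `E[R_{a ⊓ b}] ≤ V`, the defect `V - E[R_τ]` is
subadditive under `⊔`, so `σ n = sup_{k ≥ n} τ k` has defect at most `∑_{k ≥ n} 2⁻ᵏ`. The
stopping time `τ* = inf_n σ n = limsup τ n` is then optimal: along monotone limits of stopping
times, `E[R_·]` converges by path continuity and the uniform integrability of class (D), and
right-continuity of the filtration makes `inf_n σ n` a stopping time.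
-/

open MeasureTheory Filter Set

/-- A stopping time with values in `[0, T]`. -/
def StoppingTimeIn {Ω : Type*} {m : MeasurableSpace Ω} (F : Filtration ℝ m) (T : ℝ)
    (τ : Ω → ℝ) : Prop :=
  IsStoppingTime F (fun ω => (τ ω : WithTop ℝ)) ∧ ∀ ω, τ ω ∈ Set.Icc (0:ℝ) T

/-- A process adapted on the time interval `[0, T]`. -/
def AdaptedOn {Ω : Type*} {m : MeasurableSpace Ω} (F : Filtration ℝ m) (T : ℝ)
    (R : ℝ → Ω → ℝ) : Prop :=
  ∀ t ∈ Set.Icc (0:ℝ) T, StronglyMeasurable[F t] (R t)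

/-- A real function that is cadlag on `[0, T]`: right-continuous on `[0, T)` and
with left limits on `(0, T]`. -/
def CadlagOn (T : ℝ) (f : ℝ → ℝ) : Prop :=
  (∀ t ∈ Set.Ico (0:ℝ) T, Filter.Tendsto f (nhdsWithin t (Set.Ioi t)) (nhds (f t))) ∧
  (∀ t ∈ Set.Ioc (0:ℝ) T, ∃ l : ℝ, Filter.Tendsto f (nhdsWithin t (Set.Iio t)) (nhds l))

/-- A process of class (D): the family `{R_τ : τ a stopping time with values in [0,T]}`
is uniformly integrable. -/
def ClassD {Ω : Type*} {m : MeasurableSpace Ω} (F : Filtration ℝ m) (T : ℝ)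
    (P : Measure Ω) (R : ℝ → Ω → ℝ) : Prop :=
  UniformIntegrable
    (fun τ : {τ : Ω → ℝ // StoppingTimeIn F T τ} => fun ω => R (τ.1 ω) ω) 1 P

/-- A martingale on the time interval `[0, T]`: adapted, integrable, and satisfying the
martingale property `E[M_t | F_s] = M_s` for `0 ≤ s ≤ t ≤ T`. -/
def MartingaleOn {Ω : Type*} {m : MeasurableSpace Ω} (F : Filtration ℝ m) (T : ℝ)
    (P : Measure Ω) (M : ℝ → Ω → ℝ) : Prop :=
  AdaptedOn F T M ∧ (∀ t ∈ Set.Icc (0:ℝ) T, Integrable (M t) P) ∧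
    ∀ s ∈ Set.Icc (0:ℝ) T, ∀ t ∈ Set.Icc (0:ℝ) T, s ≤ t → P[M t | F s] =ᵐ[P] M s

open Topology

lemma antitone_ciSup_nat_add {α : Type*} [ConditionallyCompleteLattice α] {u : ℕ → α}
    (hu : BddAbove (range u)) : Antitone fun n => ⨆ k, u (k + n) :=
  antitone_nat_of_succ_le fun n => ciSup_le fun k =>
    le_ciSup_of_le (hu.mono (range_comp_subset_range (· + n) u)) (k + 1) <| by
      rw [add_right_comm, add_assoc]

section

variable {Ω : Type*} {m : MeasurableSpace Ω}

lemma MeasureTheory.Filtration.isRightContinuous_of_eq_iInf {ι : Type*} [LinearOrder ι]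
    [DenselyOrdered ι] [NoMaxOrder ι] {F : Filtration ι m}
    (hF : ∀ t, (F t : MeasurableSpace Ω) = ⨅ s ∈ Ioi t, (F s : MeasurableSpace Ω)) :
    F.IsRightContinuous :=
  ⟨fun t => by rw [Filtration.rightCont_eq]; exact (hF t).ge⟩

namespace StoppingTimeIn

variable {F : Filtration ℝ m} {T : ℝ}

lemma const {t : ℝ} (ht : t ∈ Icc 0 T) : StoppingTimeIn F T fun _ : Ω => t :=
  ⟨isStoppingTime_const F t, fun _ => ht⟩

protected lemma inf {a b : Ω → ℝ} (ha : StoppingTimeIn F T a) (hb : StoppingTimeIn F T b) :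
    StoppingTimeIn F T (a ⊓ b) :=
  ⟨by simpa only [Pi.inf_apply, WithTop.coe_min] using ha.1.min hb.1,
    fun ω => ⟨le_inf (ha.2 ω).1 (hb.2 ω).1, inf_le_of_left_le (ha.2 ω).2⟩⟩

protected lemma sup {a b : Ω → ℝ} (ha : StoppingTimeIn F T a) (hb : StoppingTimeIn F T b) :
    StoppingTimeIn F T (a ⊔ b) :=
  ⟨by simpa only [Pi.sup_apply, WithTop.coe_max] using ha.1.max hb.1,
    fun ω => ⟨le_sup_of_le_left (ha.2 ω).1, sup_le (ha.2 ω).2 (hb.2 ω).2⟩⟩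

protected lemma partialSups {τ : ℕ → Ω → ℝ} (hτ : ∀ n, StoppingTimeIn F T (τ n)) (n : ℕ) :
    StoppingTimeIn F T (partialSups τ n) := by
  induction n with
  | zero => simpa using hτ 0
  | succ n ih => simpa using ih.sup (hτ (n + 1))

protected lemma iSup {ι : Type*} [Countable ι] [Nonempty ι] {τ : ι → Ω → ℝ}
    (hτ : ∀ i, StoppingTimeIn F T (τ i)) : StoppingTimeIn F T fun ω => ⨆ i, τ i ω := by
  have hbdd (ω : Ω) : BddAbove (range fun i => τ i ω) :=
    ⟨T, forall_mem_range.2 fun i => ((hτ i).2 ω).2⟩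
  refine ⟨fun t => ?_, fun ω => ⟨?_, ciSup_le fun i => ((hτ i).2 ω).2⟩⟩
  · have : {ω | ((⨆ i, τ i ω : ℝ) : WithTop ℝ) ≤ t} = ⋂ i, {ω | (τ i ω : WithTop ℝ) ≤ t} := by
      ext ω
      simp [ciSup_le_iff (hbdd ω)]
    rw [this]
    exact .iInter fun i => (hτ i).1 t
  · obtain ⟨i⟩ := ‹Nonempty ι›
    exact ((hτ i).2 ω).1.trans (le_ciSup (hbdd ω) i)

protected lemma iInf [F.IsRightContinuous] {ι : Type*} [Countable ι] [Nonempty ι]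
    {τ : ι → Ω → ℝ} (hτ : ∀ i, StoppingTimeIn F T (τ i)) :
    StoppingTimeIn F T fun ω => ⨅ i, τ i ω := by
  have hbdd (ω : Ω) : BddBelow (range fun i => τ i ω) :=
    ⟨0, forall_mem_range.2 fun i => ((hτ i).2 ω).1⟩
  refine ⟨isStoppingTime_of_measurableSet_lt_of_isRightContinuous fun t => ?_,
    fun ω => ⟨le_ciInf fun i => ((hτ i).2 ω).1, ?_⟩⟩
  · have : {ω | ((⨅ i, τ i ω : ℝ) : WithTop ℝ) < t} = ⋃ i, {ω | (τ i ω : WithTop ℝ) < t} := by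
      ext ω
      simp [ciInf_lt_iff (hbdd ω)]
    rw [this]
    exact .iUnion fun i => (hτ i).1.measurableSet_lt t
  · obtain ⟨i⟩ := ‹Nonempty ι›
    exact (ciInf_le (hbdd ω) i).trans ((hτ i).2 ω).2

end StoppingTimeIn

/-- `sSup` makes this a junk `0` when the expected rewards are unbounded above, which class (D)
excludes. -/
noncomputable def optimalStoppingValue (F : Filtration ℝ m) (T : ℝ) (P : Measure Ω)
    (R : ℝ → Ω → ℝ) : ℝ :=
  sSup {r : ℝ | ∃ τ : Ω → ℝ, StoppingTimeIn F T τ ∧ r = ∫ ω, R (τ ω) ω ∂P}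

variable {F : Filtration ℝ m} {T : ℝ} {P : Measure Ω} {R : ℝ → Ω → ℝ}

lemma exists_stoppingTimeIn_sub_lt_integral (hT : 0 ≤ T) {ε : ℝ} (hε : 0 < ε) :
    ∃ τ, StoppingTimeIn F T τ ∧ optimalStoppingValue F T P R - ε < ∫ ω, R (τ ω) ω ∂P := by
  have hne : {r : ℝ | ∃ τ : Ω → ℝ, StoppingTimeIn F T τ ∧ r = ∫ ω, R (τ ω) ω ∂P}.Nonempty :=
    ⟨_, fun _ => 0, StoppingTimeIn.const ⟨le_rfl, hT⟩, rfl⟩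
  obtain ⟨_, ⟨τ, hτ, rfl⟩, hlt⟩ := exists_lt_of_lt_csSup hne (sub_lt_self _ hε)
  exact ⟨τ, hτ, hlt⟩

namespace ClassD

variable (hR : ClassD F T P R)
include hR

lemma integrable {τ : Ω → ℝ} (hτ : StoppingTimeIn F T τ) :
    Integrable (fun ω => R (τ ω) ω) P :=
  memLp_one_iff_integrable.1 (UniformIntegrable.memLp hR ⟨τ, hτ⟩)

lemma bddAbove_integral :
    BddAbove {r : ℝ | ∃ τ : Ω → ℝ, StoppingTimeIn F T τ ∧ r = ∫ ω, R (τ ω) ω ∂P} := by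
  obtain ⟨C, hC⟩ := hR.2.2
  refine ⟨C, ?_⟩
  rintro _ ⟨τ, hτ, rfl⟩
  calc ∫ ω, R (τ ω) ω ∂P ≤ ∫ ω, ‖R (τ ω) ω‖ ∂P :=
        integral_mono (hR.integrable hτ) (hR.integrable hτ).norm fun ω => le_abs_self _
    _ = (eLpNorm (fun ω => R (τ ω) ω) 1 P).toReal := by
        rw [integral_norm_eq_lintegral_enorm (hR.1 ⟨τ, hτ⟩), eLpNorm_one_eq_lintegral_enorm]
    _ ≤ C := ENNReal.toReal_le_coe_of_le_coe (hC ⟨τ, hτ⟩)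

lemma integral_le_optimalStoppingValue {τ : Ω → ℝ} (hτ : StoppingTimeIn F T τ) :
    ∫ ω, R (τ ω) ω ∂P ≤ optimalStoppingValue F T P R :=
  le_csSup hR.bddAbove_integral ⟨τ, hτ, rfl⟩

lemma integral_inf_add_integral_sup {a b : Ω → ℝ} (ha : StoppingTimeIn F T a)
    (hb : StoppingTimeIn F T b) :
    ∫ ω, R ((a ⊓ b) ω) ω ∂P + ∫ ω, R ((a ⊔ b) ω) ω ∂P
      = ∫ ω, R (a ω) ω ∂P + ∫ ω, R (b ω) ω ∂P := by
  rw [← integral_add (hR.integrable (ha.inf hb)) (hR.integrable (ha.sup hb)),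
    ← integral_add (hR.integrable ha) (hR.integrable hb)]
  congr 1 with ω
  rcases le_total (a ω) (b ω) with h | h
  · simp [h]
  · simp [h, add_comm]

lemma sub_add_le_integral_sup {a b : Ω → ℝ} (ha : StoppingTimeIn F T a)
    (hb : StoppingTimeIn F T b) {ε δ : ℝ}
    (hεa : optimalStoppingValue F T P R - ε ≤ ∫ ω, R (a ω) ω ∂P)
    (hδb : optimalStoppingValue F T P R - δ ≤ ∫ ω, R (b ω) ω ∂P) :
    optimalStoppingValue F T P R - (ε + δ) ≤ ∫ ω, R ((a ⊔ b) ω) ω ∂P := by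
  linarith [hR.integral_inf_add_integral_sup ha hb,
    hR.integral_le_optimalStoppingValue (ha.inf hb)]

lemma sub_sum_le_integral_partialSups {τ : ℕ → Ω → ℝ} (hτ : ∀ n, StoppingTimeIn F T (τ n))
    {ε : ℕ → ℝ} (hε : ∀ n, optimalStoppingValue F T P R - ε n ≤ ∫ ω, R (τ n ω) ω ∂P) (n : ℕ) :
    optimalStoppingValue F T P R - ∑ k ∈ Finset.range (n + 1), ε k
      ≤ ∫ ω, R (partialSups τ n ω) ω ∂P := by
  induction n with
  | zero => simpa using hε 0
  | succ n ih =>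
    rw [Finset.sum_range_succ, partialSups_add_one]
    exact hR.sub_add_le_integral_sup (StoppingTimeIn.partialSups hτ n) (hτ (n + 1)) ih (hε _)

lemma tendsto_integral [IsFiniteMeasure P]
    (hRcont : ∀ ω, ContinuousOn (fun t => R t ω) (Icc 0 T))
    {ρ : ℕ → Ω → ℝ} (hρ : ∀ n, StoppingTimeIn F T (ρ n))
    {σ : Ω → ℝ} (hσ : StoppingTimeIn F T σ) (hlim : ∀ ω, Tendsto (ρ · ω) atTop (𝓝 (σ ω))) :
    Tendsto (fun n => ∫ ω, R (ρ n ω) ω ∂P) atTop (𝓝 (∫ ω, R (σ ω) ω ∂P)) := by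
  have hui : UnifIntegrable (fun n ω => R (ρ n ω) ω) 1 P := fun ε hε => by
    obtain ⟨δ, hδ, hδε⟩ := hR.2.1 hε
    exact ⟨δ, hδ, fun n => hδε ⟨ρ n, hρ n⟩⟩
  have hae : ∀ᵐ ω ∂P, Tendsto (fun n => R (ρ n ω) ω) atTop (𝓝 (R (σ ω) ω)) :=
    ae_of_all _ fun ω => ((hRcont ω) (σ ω) (hσ.2 ω)).tendsto.comp <|
      tendsto_nhdsWithin_iff.2 ⟨hlim ω, Eventually.of_forall fun n => (hρ n).2 ω⟩
  have hL1 := tendsto_Lp_finite_of_tendsto_ae le_rfl ENNReal.one_ne_top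
    (fun n => hR.1 ⟨ρ n, hρ n⟩) (UniformIntegrable.memLp hR ⟨σ, hσ⟩) hui hae
  refine tendsto_integral_of_L1 _ (hR.1 ⟨σ, hσ⟩)
    (Eventually.of_forall fun n => hR.integrable (hρ n)) ?_
  simpa only [eLpNorm_one_eq_lintegral_enorm, Pi.sub_apply] using hL1

lemma sub_tsum_le_integral_iSup [IsFiniteMeasure P]
    (hRcont : ∀ ω, ContinuousOn (fun t => R t ω) (Icc 0 T))
    {τ : ℕ → Ω → ℝ} (hτ : ∀ n, StoppingTimeIn F T (τ n)) {ε : ℕ → ℝ} (hε₀ : 0 ≤ ε)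
    (hεs : Summable ε)
    (hε : ∀ n, optimalStoppingValue F T P R - ε n ≤ ∫ ω, R (τ n ω) ω ∂P) :
    optimalStoppingValue F T P R - ∑' k, ε k ≤ ∫ ω, R (⨆ k, τ k ω) ω ∂P := by
  have hlim (ω : Ω) : Tendsto (partialSups τ · ω) atTop (𝓝 (⨆ k, τ k ω)) := by
    simp only [Pi.partialSups_apply]
    rw [← ciSup_partialSups_eq']
    exact tendsto_atTop_ciSup (partialSups_monotone _) <| bddAbove_range_partialSups.2
      ⟨T, forall_mem_range.2 fun k => ((hτ k).2 ω).2⟩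
  refine ge_of_tendsto (hR.tendsto_integral hRcont (StoppingTimeIn.partialSups hτ)
    (StoppingTimeIn.iSup hτ) hlim) (Eventually.of_forall fun n => ?_)
  exact (sub_le_sub_left (hεs.sum_le_tsum _ fun k _ => hε₀ k) _).trans
    (hR.sub_sum_le_integral_partialSups hτ hε n)

end ClassD

end

theorem exists_optimal_stopping_time_of_continuous_general
    {Ω : Type*} {m : MeasurableSpace Ω} (P : Measure Ω) [IsProbabilityMeasure P]
    (F : Filtration ℝ m) (T : ℝ) (hT : 0 < T)
    (hright : ∀ t : ℝ, (F t : MeasurableSpace Ω) = ⨅ s ∈ Set.Ioi t, (F s : MeasurableSpace Ω))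
    (R : ℝ → Ω → ℝ)
    (hRcont : ∀ ω, ContinuousOn (fun t => R t ω) (Set.Icc (0:ℝ) T))
    (hRD : ClassD F T P R) :
    ∃ τstar : Ω → ℝ, StoppingTimeIn F T τstar ∧
      IsGreatest {r : ℝ | ∃ τ : Ω → ℝ, StoppingTimeIn F T τ ∧ r = ∫ ω, R (τ ω) ω ∂P}
        (∫ ω, R (τstar ω) ω ∂P) := by
  have := Filtration.isRightContinuous_of_eq_iInf hright
  set V := optimalStoppingValue F T P R
  choose τ hτ hτV using fun n : ℕ =>
    exists_stoppingTimeIn_sub_lt_integral (F := F) (P := P) (R := R) hT.le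
      (pow_pos (one_half_pos (α := ℝ)) n)
  set σ : ℕ → Ω → ℝ := fun n ω => ⨆ k, τ (k + n) ω
  have hσ (n : ℕ) : StoppingTimeIn F T (σ n) := StoppingTimeIn.iSup fun k => hτ (k + n)
  have hσV (n : ℕ) : V - ∑' k, (1 / 2 : ℝ) ^ (k + n) ≤ ∫ ω, R (σ n ω) ω ∂P :=
    hRD.sub_tsum_le_integral_iSup hRcont (fun k => hτ (k + n)) (fun k => by positivity)
      ((summable_nat_add_iff n).2 summable_geometric_two) fun k => (hτV (k + n)).le
  have hσlim (ω : Ω) : Tendsto (σ · ω) atTop (𝓝 (⨅ n, σ n ω)) := by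
    refine tendsto_atTop_ciInf ?_ ⟨0, forall_mem_range.2 fun n => ((hσ n).2 ω).1⟩
    exact antitone_ciSup_nat_add ⟨T, forall_mem_range.2 fun k => ((hτ k).2 ω).2⟩
  have hVle : V ≤ ∫ ω, R (⨅ n, σ n ω) ω ∂P :=
    le_of_tendsto_of_tendsto'
      (by simpa using (tendsto_sum_nat_add fun k => (1 / 2 : ℝ) ^ k).const_sub V)
      (hRD.tendsto_integral hRcont hσ (StoppingTimeIn.iInf hσ) hσlim) hσV
  refine ⟨_, StoppingTimeIn.iInf hσ, ⟨_, StoppingTimeIn.iInf hσ, rfl⟩, ?_⟩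
  rintro _ ⟨ρ, hρ, rfl⟩
  exact (hRD.integral_le_optimalStoppingValue hρ).trans hVle

/-- **Existence of optimal stopping times for continuous rewards.** A continuous adapted
class (D) reward process `R` on `[0,T]` admits an optimal stopping time. -/
theorem exists_optimal_stopping_time_of_continuous
    {Ω : Type*} {m : MeasurableSpace Ω} (P : Measure Ω) [IsProbabilityMeasure P]
    (F : Filtration ℝ m) (T : ℝ) (hT : 0 < T)
    (hright : ∀ t : ℝ, (F t : MeasurableSpace Ω) = ⨅ s ∈ Set.Ioi t, (F s : MeasurableSpace Ω))
    (hnull : ∀ A : Set Ω, P A = 0 → MeasurableSet[F 0] A)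
    (R : ℝ → Ω → ℝ)
    (hRadapted : AdaptedOn F T R)
    (hRcont : ∀ ω, ContinuousOn (fun t => R t ω) (Set.Icc (0:ℝ) T))
    (hRD : ClassD F T P R) :
    ∃ τstar : Ω → ℝ, StoppingTimeIn F T τstar ∧
      IsGreatest {r : ℝ | ∃ τ : Ω → ℝ, StoppingTimeIn F T τ ∧ r = ∫ ω, R (τ ω) ω ∂P}
        (∫ ω, R (τstar ω) ω ∂P) :=
  exists_optimal_stopping_time_of_continuous_general P F T hT hright R hRcont hRD
end

section
/- Let (Ω, F, (F_t)_{t∈[0,T]}, P) be a filtered probability space with finite horizon T > 0 satisfying the usual conditions (the filtration is right-continuous and F_0 contains all P-null sets). Let (R^n) be a sequence of adapted real-valued processes on [0,T] with cadlag paths, each of class (D) (i.e. for each n, the family {R^n_τ : τ a stopping time with values in [0,T]} is uniformly integrable), which is Cauchy in the norm ‖y‖ := sup_τ E[|y_τ|] (supremum over all stopping times τ with values in [0,T]): for every ε > 0 there is N such that sup_τ E[|R^n_τ − R^m_τ|] ≤ ε for all n, m ≥ N. Then there exists an adapted real-valued process R on [0,T] with cadlag paths, of class (D), such that sup_τ E[|R^n_τ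 − R_τ|] → 0 as n → ∞. -/
open MeasureTheory Filter Set

open scoped ENNReal Topology

/-!
Pass to a subsequence with `‖R^{n_{k+1}} - R^{n_k}‖ ≤ 4^{-k}`. Stopping at the first time at
which `|R^{n_{k+1}} - R^{n_k}|` exceeds `2^{-k}` gives the maximal inequality
`P(sup_{t ≤ T} |R^{n_{k+1}}_t - R^{n_k}_t| > 2^{-k}) ≤ 2^{-k}`, so by Borel–Cantelli the
subsequence converges uniformly on `[0, T]` almost surely. The limit is cadlag, and adapted
because `F 0` contains the null sets. Fatou's lemma at each stopping time upgrades this to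
convergence in `D¹`, and the limit is of class (D) because uniform integrability survives
perturbations that are small in `L¹` uniformly over the family.
-/

section FirstEntry

variable {Ω : Type*} {m : MeasurableSpace Ω}

open Classical in
noncomputable def firstEntry (s : Finset ℝ) (T : ℝ) (E : ℝ → Set Ω) (ω : Ω) : ℝ :=
  (insert T (s.filter fun t => ω ∈ E t)).min' (Finset.insert_nonempty _ _)

variable {s : Finset ℝ} {T : ℝ} {E : ℝ → Set Ω}

lemma firstEntry_le_iff {ω : Ω} {u : ℝ} :
    firstEntry s T E ω ≤ u ↔ T ≤ u ∨ ∃ t ∈ s, t ≤ u ∧ ω ∈ E t := by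
  simp only [firstEntry, Finset.min'_eq_inf', Finset.inf'_le_iff, Finset.mem_insert,
    Finset.mem_filter, id]
  grind

open Classical in
lemma firstEntry_eq_or_mem (ω : Ω) :
    firstEntry s T E ω = T ∨ firstEntry s T E ω ∈ s ∧ ω ∈ E (firstEntry s T E ω) := by
  have := Finset.min'_mem _ (Finset.insert_nonempty T (s.filter fun t => ω ∈ E t))
  simp only [Finset.mem_insert, Finset.mem_filter] at this
  exact this

lemma firstEntry_mem_Icc (hT : 0 ≤ T) (hs : ∀ t ∈ s, t ∈ Icc 0 T) (ω : Ω) :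
    firstEntry s T E ω ∈ Icc 0 T := by
  obtain h | ⟨h, -⟩ := firstEntry_eq_or_mem (s := s) (E := E) (T := T) ω
  · rw [h]; exact ⟨hT, le_rfl⟩
  · exact hs _ h

lemma mem_firstEntry (hs : ∀ t ∈ s, t ≤ T) {ω : Ω} (h : ∃ t ∈ s, ω ∈ E t) :
    ω ∈ E (firstEntry s T E ω) := by
  obtain ⟨t, hts, htE⟩ := h
  obtain h | ⟨-, h⟩ := firstEntry_eq_or_mem (s := s) (E := E) (T := T) ω
  · have hle : firstEntry s T E ω ≤ t := firstEntry_le_iff.2 (Or.inr ⟨t, hts, le_rfl, htE⟩)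
    rwa [h, ← le_antisymm (hs t hts) (h ▸ hle)]
  · exact h

lemma stoppingTimeIn_firstEntry (F : Filtration ℝ m) (hT : 0 ≤ T) (hs : ∀ t ∈ s, t ∈ Icc 0 T)
    (hE : ∀ t ∈ s, MeasurableSet[F t] (E t)) : StoppingTimeIn F T (firstEntry s T E) := by
  refine ⟨fun u => ?_, firstEntry_mem_Icc hT hs⟩
  have : {ω | ((firstEntry s T E ω : ℝ) : WithTop ℝ) ≤ u} =
      {_ω | T ≤ u} ∪ ⋃ t ∈ s.filter (· ≤ u), E t := by
    ext ω
    simp [firstEntry_le_iff, and_assoc]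
  rw [this]
  refine (MeasurableSet.const _).union (Finset.measurableSet_biUnion _ fun t ht => ?_)
  obtain ⟨hts, htu⟩ := Finset.mem_filter.1 ht
  exact F.mono htu _ (hE t hts)

end FirstEntry

lemma exists_mem_insert_rat_of_rightContinuous {f : ℝ → ℝ} {T : ℝ}
    (hf : ∀ t ∈ Ico 0 T, Tendsto f (𝓝[>] t) (𝓝 (f t))) {U : Set ℝ} (hU : IsOpen U) {t : ℝ}
    (ht : t ∈ Icc 0 T) (hft : f t ∈ U) :
    ∃ q ∈ insert T (Ico 0 T ∩ range ((↑) : ℚ → ℝ)), f q ∈ U := by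
  rcases ht.2.eq_or_lt with rfl | htT
  · exact ⟨t, mem_insert _ _, hft⟩
  have hev : ∀ᶠ s in 𝓝[>] t, f s ∈ U ∧ s < T :=
    ((hf t ⟨ht.1, htT⟩).eventually_mem (hU.mem_nhds hft)).and
      (mem_nhdsWithin_of_mem_nhds (Iio_mem_nhds htT))
  obtain ⟨u, htu, hsub⟩ := mem_nhdsGT_iff_exists_Ioo_subset.1 hev
  obtain ⟨q, htq, hqu⟩ := exists_rat_btwn (show t < u from htu)
  obtain ⟨hfq, hqT⟩ := hsub ⟨htq, hqu⟩
  exact ⟨q, mem_insert_of_mem _ ⟨⟨ht.1.trans htq.le, hqT⟩, q, rfl⟩, hfq⟩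

section Maximal

variable {Ω : Type*} {m : MeasurableSpace Ω} {μ : Measure Ω} {F : Filtration ℝ m} {T : ℝ}
  {y : ℝ → Ω → ℝ} {C : ℝ≥0∞}

lemma ofReal_mul_measure_exists_mem_finset_lt_abs_le (hT : 0 ≤ T) (hy : AdaptedOn F T y)
    (hC : ∀ τ, StoppingTimeIn F T τ → eLpNorm (fun ω => y (τ ω) ω) 1 μ ≤ C)
    {s : Finset ℝ} (hs : ∀ t ∈ s, t ∈ Icc 0 T) (c : ℝ) :
    ENNReal.ofReal c * μ {ω | ∃ t ∈ s, c < |y t ω|} ≤ C := by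
  set E : ℝ → Set Ω := fun t => {ω | c < |y t ω|}
  have hE : ∀ t ∈ s, MeasurableSet[F t] (E t) := fun t ht =>
    (hy t (hs t ht)).measurable (isOpen_lt continuous_const continuous_abs).measurableSet
  have hA_eq : {ω | ∃ t ∈ s, c < |y t ω|} = ⋃ t ∈ s, E t := by ext; simp [E]
  have hA : MeasurableSet (⋃ t ∈ s, E t) :=
    Finset.measurableSet_biUnion s fun t ht => F.le t _ (hE t ht)
  rw [hA_eq]
  set τ := firstEntry s T E
  have hτ : StoppingTimeIn F T τ := stoppingTimeIn_firstEntry F hT hs hE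
  calc ENNReal.ofReal c * μ (⋃ t ∈ s, E t)
      = ∫⁻ _ in (⋃ t ∈ s, E t), ENNReal.ofReal c ∂μ := (setLIntegral_const _ _).symm
    _ ≤ ∫⁻ ω in (⋃ t ∈ s, E t), ‖y (τ ω) ω‖ₑ ∂μ := by
        refine setLIntegral_mono' hA fun ω hω => ?_
        rw [Real.enorm_eq_ofReal_abs]
        have hτω : ω ∈ E (τ ω) := mem_firstEntry (fun t ht => (hs t ht).2)
          (by simpa only [mem_iUnion, exists_prop] using hω)
        exact ENNReal.ofReal_le_ofReal hτω.le
    _ ≤ ∫⁻ ω, ‖y (τ ω) ω‖ₑ ∂μ := setLIntegral_le_lintegral _ _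
    _ = eLpNorm (fun ω => y (τ ω) ω) 1 μ := eLpNorm_one_eq_lintegral_enorm.symm
    _ ≤ C := hC τ hτ

/-- Right-continuity reduces the supremum over `[0, T]` to one over a
countable set, exhausted by finite sets on which the first entry time is a stopping time. -/
theorem ofReal_mul_measure_exists_lt_abs_le (hT : 0 ≤ T) (hy : AdaptedOn F T y)
    (hright : ∀ ω, ∀ t ∈ Ico 0 T, Tendsto (fun s => y s ω) (𝓝[>] t) (𝓝 (y t ω)))
    (hC : ∀ τ, StoppingTimeIn F T τ → eLpNorm (fun ω => y (τ ω) ω) 1 μ ≤ C) (c : ℝ) :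
    ENNReal.ofReal c * μ {ω | ∃ t ∈ Icc 0 T, c < |y t ω|} ≤ C := by
  set D := insert T (Ico 0 T ∩ range ((↑) : ℚ → ℝ))
  have hD : D ⊆ Icc 0 T := insert_subset ⟨hT, le_rfl⟩ fun t ht => Ico_subset_Icc_self ht.1
  obtain ⟨e, he⟩ : ∃ e : ℕ → ℝ, D = range e :=
    ((countable_range ((↑) : ℚ → ℝ)).mono inter_subset_right).insert T |>.exists_eq_range
      (insert_nonempty T _)
  set A : ℕ → Set Ω := fun K => {ω | ∃ t ∈ (Finset.range K).image e, c < |y t ω|}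
  have hA : Monotone A := fun K L hKL ω ⟨t, ht, hct⟩ =>
    ⟨t, Finset.image_subset_image (Finset.range_mono hKL) ht, hct⟩
  have hsub : {ω | ∃ t ∈ Icc 0 T, c < |y t ω|} ⊆ ⋃ K, A K := by
    rintro ω ⟨t, ht, hct⟩
    obtain ⟨q, hqD, hcq⟩ := exists_mem_insert_rat_of_rightContinuous (hright ω)
      (isOpen_lt continuous_const continuous_abs) ht hct
    obtain ⟨i, rfl⟩ : q ∈ range e := he ▸ hqD
    exact mem_iUnion.2 ⟨i + 1, e i, Finset.mem_image_of_mem e (Finset.self_mem_range_succ i), hcq⟩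
  have heD : ∀ K, ∀ t ∈ (Finset.range K).image e, t ∈ Icc 0 T := fun K t ht => by
    obtain ⟨i, -, rfl⟩ := Finset.mem_image.1 ht
    exact hD (by rw [he]; exact mem_range_self i)
  calc ENNReal.ofReal c * μ {ω | ∃ t ∈ Icc 0 T, c < |y t ω|}
      ≤ ENNReal.ofReal c * μ (⋃ K, A K) := by gcongr
    _ = ⨆ K, ENNReal.ofReal c * μ (A K) := by rw [hA.measure_iUnion, ENNReal.mul_iSup]
    _ ≤ C := iSup_le fun K =>
        ofReal_mul_measure_exists_mem_finset_lt_abs_le hT hy hC (heD K) c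

end Maximal

lemma uniformCauchySeqOn_of_eventually_dist_le_geometric {α β : Type*} [PseudoMetricSpace β]
    {F : ℕ → α → β} {s : Set α} {r : ℝ} (hr₀ : 0 ≤ r) (hr : r < 1)
    (h : ∀ᶠ k in atTop, ∀ x ∈ s, dist (F k x) (F (k + 1) x) ≤ r ^ k) :
    UniformCauchySeqOn F atTop s := by
  obtain ⟨K, hK⟩ := eventually_atTop.1 h
  have htail : ∀ m n, K ≤ m → m ≤ n → ∀ x ∈ s, dist (F m x) (F n x) ≤ r ^ m / (1 - r) :=
    fun m n hKm hmn x hx => (dist_le_Ico_sum_of_dist_le hmn fun hm _ =>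
      hK _ (hKm.trans hm) x hx).trans (geom_sum_Ico_le_of_lt_one hr₀ hr)
  have hsmall : Tendsto (fun N => 2 * (r ^ N / (1 - r))) atTop (𝓝 0) := by
    simpa using ((tendsto_pow_atTop_nhds_zero_of_lt_one hr₀ hr).div_const (1 - r)).const_mul 2
  rw [Metric.uniformCauchySeqOn_iff]
  intro ε hε
  obtain ⟨N, hNε, hKN⟩ := ((hsmall.eventually (gt_mem_nhds hε)).and (eventually_ge_atTop K)).exists
  refine ⟨N, fun m hm n hn x hx => ?_⟩
  calc dist (F m x) (F n x) ≤ dist (F N x) (F m x) + dist (F N x) (F n x) :=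
        dist_triangle_left _ _ _
    _ ≤ 2 * (r ^ N / (1 - r)) := by linarith [htail N m hKN hm x hx, htail N n hKN hn x hx]
    _ < ε := hNε

lemma cauchy_map_of_tendstoUniformlyOnFilter {α β : Type*} [PseudoMetricSpace β] {l : Filter α}
    [NeBot l] {f : α → β} {a : ℕ → α → β} (h : TendstoUniformlyOnFilter a f atTop l)
    (ha : ∀ k, Cauchy (map (a k) l)) : Cauchy (map f l) := by
  simp only [cauchy_map_iff', Metric.uniformity_basis_dist.tendsto_right_iff] at ha ⊢
  intro ε hε
  obtain ⟨k, hk⟩ := ((Metric.tendstoUniformlyOnFilter_iff.1 h (ε / 3) (by positivity)).curry).exists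
  filter_upwards [tendsto_fst.eventually hk, tendsto_snd.eventually hk,
    ha k (ε / 3) (by positivity)] with p h₁ h₂ h₃
  calc dist (f p.1) (f p.2) ≤ dist (f p.1) (a k p.1) + dist (a k p.1) (a k p.2) +
        dist (a k p.2) (f p.2) := dist_triangle4 _ _ _ _
    _ < ε := by rw [dist_comm (a k p.2)]; linarith

lemma cadlagOn_const (T c : ℝ) : CadlagOn T fun _ => c :=
  ⟨fun _ _ => tendsto_const_nhds, fun _ _ => ⟨c, tendsto_const_nhds⟩⟩

namespace CadlagOn

variable {T : ℝ} {a : ℕ → ℝ → ℝ} {f : ℝ → ℝ}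

theorem of_tendstoUniformlyOn (ha : ∀ k, CadlagOn T (a k))
    (h : TendstoUniformlyOn a f atTop (Icc 0 T)) : CadlagOn T f := by
  constructor
  · intro t ht
    have hnhds : Icc 0 T ∈ 𝓝[>] t := mem_of_superset (Ioo_mem_nhdsGT ht.2)
      fun s hs => ⟨ht.1.trans hs.1.le, hs.2.le⟩
    exact (h.tendstoUniformlyOnFilter.mono_right (le_principal_iff.2 hnhds))
      |>.tendsto_of_eventually_tendsto (Eventually.of_forall fun k => (ha k).1 t ht)
        (h.tendsto_at (Ico_subset_Icc_self ht))
  · intro t ht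
    have hnhds : Icc 0 T ∈ 𝓝[<] t := mem_of_superset (Ioo_mem_nhdsLT ht.1)
      fun s hs => ⟨hs.1.le, hs.2.le.trans ht.2⟩
    refine cauchy_map_iff_exists_tendsto.1 (cauchy_map_of_tendstoUniformlyOnFilter
      (h.tendstoUniformlyOnFilter.mono_right (le_principal_iff.2 hnhds)) fun k => ?_)
    obtain ⟨l, hl⟩ := (ha k).2 t ht
    exact hl.cauchy_map

end CadlagOn

section Integrals

variable {α : Type*} [MeasurableSpace α] {μ : Measure α}

lemma eLpNorm_one_eq_ofReal_integral_abs {f : α → ℝ} (hf : Integrable f μ) :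
    eLpNorm f 1 μ = ENNReal.ofReal (∫ x, |f x| ∂μ) := by
  rw [eLpNorm_one_eq_lintegral_enorm, ← ofReal_integral_norm_eq_lintegral_enorm hf]
  rfl

lemma integral_abs_le_of_eLpNorm_one_le {f : α → ℝ} (hf : AEStronglyMeasurable f μ) {ε : ℝ}
    (hε : 0 ≤ ε) (h : eLpNorm f 1 μ ≤ ENNReal.ofReal ε) : ∫ x, |f x| ∂μ ≤ ε := by
  rw [eLpNorm_one_eq_lintegral_enorm] at h
  exact (integral_norm_eq_lintegral_enorm hf).trans_le (ENNReal.toReal_le_of_le_ofReal hε h)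

variable {ι β : Type*} [NormedAddCommGroup β] {p : ℝ≥0∞}

theorem UniformIntegrable.of_forall_eLpNorm_sub_le (hp : 1 ≤ p) {f : ι → α → β}
    (hf : ∀ i, AEStronglyMeasurable (f i) μ)
    (h : ∀ ε > 0, ∃ g : ι → α → β, UniformIntegrable g p μ ∧
      ∀ i, eLpNorm (f i - g i) p μ ≤ ENNReal.ofReal ε) :
    UniformIntegrable f p μ := by
  refine ⟨hf, fun ε hε => ?_, ?_⟩
  · obtain ⟨g, hg, hfg⟩ := h (ε / 2) (half_pos hε)
    obtain ⟨δ, hδ, hgδ⟩ := hg.2.1 (half_pos hε)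
    refine ⟨δ, hδ, fun i s hs hμs => ?_⟩
    calc eLpNorm (s.indicator (f i)) p μ
        = eLpNorm (s.indicator (f i - g i) + s.indicator (g i)) p μ := by
          rw [← indicator_add', sub_add_cancel]
      _ ≤ eLpNorm (s.indicator (f i - g i)) p μ + eLpNorm (s.indicator (g i)) p μ :=
          eLpNorm_add_le (((hf i).sub (hg.1 i)).indicator hs) ((hg.1 i).indicator hs) hp
      _ ≤ ENNReal.ofReal (ε / 2) + ENNReal.ofReal (ε / 2) :=
          add_le_add ((eLpNorm_indicator_le _).trans (hfg i)) (hgδ i s hs hμs)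
      _ = ENNReal.ofReal ε := by
          rw [← ENNReal.ofReal_add (by positivity) (by positivity), add_halves]
  · obtain ⟨g, hg, hfg⟩ := h 1 one_pos
    obtain ⟨C, hC⟩ := hg.2.2
    refine ⟨1 + C, fun i => ?_⟩
    calc eLpNorm (f i) p μ = eLpNorm (f i - g i + g i) p μ := by rw [sub_add_cancel]
      _ ≤ eLpNorm (f i - g i) p μ + eLpNorm (g i) p μ :=
          eLpNorm_add_le ((hf i).sub (hg.1 i)) (hg.1 i) hp
      _ ≤ ENNReal.ofReal 1 + C := add_le_add (hfg i) (hC i)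
      _ = ↑(1 + C) := by simp

theorem eLpNorm_sub_le_of_cauchy_of_ae_tendsto {f : ℕ → ι → α → β} {g : ι → α → β}
    (hf : ∀ n i, AEStronglyMeasurable (f n i) μ)
    (hcauchy : ∀ ε > 0, ∃ N, ∀ n ≥ N, ∀ m ≥ N, ∀ i, eLpNorm (f n i - f m i) p μ ≤ ENNReal.ofReal ε)
    {φ : ℕ → ℕ} (hφ : Tendsto φ atTop atTop)
    (hlim : ∀ i, ∀ᵐ x ∂μ, Tendsto (fun k => f (φ k) i x) atTop (𝓝 (g i x))) {ε : ℝ} (hε : 0 < ε) :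
    ∃ N, ∀ n ≥ N, ∀ i, eLpNorm (f n i - g i) p μ ≤ ENNReal.ofReal ε := by
  obtain ⟨N, hN⟩ := hcauchy ε hε
  refine ⟨N, fun n hn i => Lp.eLpNorm_le_of_ae_tendsto (u := atTop) ?_
    (fun k => (hf n i).sub (hf (φ k) i)) ?_⟩
  · filter_upwards [hφ.eventually_ge_atTop N] with k hk using hN n hn (φ k) hk i
  · filter_upwards [hlim i] with x hx using tendsto_const_nhds.sub hx

end Integrals

section Processes

variable {Ω : Type*} {m : MeasurableSpace Ω} {F : Filtration ℝ m} {T : ℝ}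

lemma ClassD.integrable_s12 {μ : Measure Ω} {R : ℝ → Ω → ℝ} (hR : ClassD F T μ R) {τ : Ω → ℝ}
    (hτ : StoppingTimeIn F T τ) : Integrable (fun ω => R (τ ω) ω) μ :=
  memLp_one_iff_integrable.1 (hR.memLp ⟨τ, hτ⟩)

lemma AdaptedOn.of_tendsto {X : ℕ → ℝ → Ω → ℝ} {S : ℝ → Ω → ℝ} (hX : ∀ k, AdaptedOn F T (X k))
    (hS : ∀ ω, ∀ t ∈ Icc 0 T, Tendsto (fun k => X k t ω) atTop (𝓝 (S t ω))) : AdaptedOn F T S :=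
  fun t ht => stronglyMeasurable_of_tendsto atTop (fun k => hX k t ht)
    (tendsto_pi_nhds.2 fun ω => hS ω t ht)

lemma exists_adaptedOn_cadlagOn_of_uniformCauchySeqOn {X : ℕ → ℝ → Ω → ℝ}
    (hX : ∀ k, AdaptedOn F T (X k)) (hXc : ∀ k ω, CadlagOn T fun t => X k t ω)
    (hcau : ∀ ω, UniformCauchySeqOn (fun k t => X k t ω) atTop (Icc 0 T)) :
    ∃ S : ℝ → Ω → ℝ, AdaptedOn F T S ∧ (∀ ω, CadlagOn T fun t => S t ω) ∧
      ∀ ω, ∀ t ∈ Icc 0 T, Tendsto (fun k => X k t ω) atTop (𝓝 (S t ω)) := by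
  set S : ℝ → Ω → ℝ := fun t ω => limUnder atTop fun k => X k t ω
  have hunif : ∀ ω, TendstoUniformlyOn (fun k t => X k t ω) (fun t => S t ω) atTop (Icc 0 T) :=
    fun ω => (hcau ω).tendstoUniformlyOn_of_tendsto fun t ht =>
      tendsto_nhds_limUnder (cauchySeq_tendsto_of_complete ((hcau ω).cauchySeq ht))
  have hlim : ∀ ω, ∀ t ∈ Icc 0 T, Tendsto (fun k => X k t ω) atTop (𝓝 (S t ω)) :=
    fun ω _ ht => (hunif ω).tendsto_at ht
  exact ⟨S, AdaptedOn.of_tendsto hX hlim,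
    fun ω => CadlagOn.of_tendstoUniformlyOn (fun k => hXc k ω) (hunif ω), hlim⟩

/-- Since `F 0` contains the null sets, the paths that fail to be uniformly Cauchy can be
replaced by `0` without losing adaptedness. -/
lemma exists_adaptedOn_cadlagOn_of_ae_uniformCauchySeqOn {μ : Measure Ω}
    (hnull : ∀ A : Set Ω, μ A = 0 → MeasurableSet[F 0] A) {X : ℕ → ℝ → Ω → ℝ}
    (hX : ∀ k, AdaptedOn F T (X k)) (hXc : ∀ k ω, CadlagOn T fun t => X k t ω)
    (hcau : ∀ᵐ ω ∂μ, UniformCauchySeqOn (fun k t => X k t ω) atTop (Icc 0 T)) :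
    ∃ S : ℝ → Ω → ℝ, AdaptedOn F T S ∧ (∀ ω, CadlagOn T fun t => S t ω) ∧
      ∀ᵐ ω ∂μ, ∀ t ∈ Icc 0 T, Tendsto (fun k => X k t ω) atTop (𝓝 (S t ω)) := by
  set G := {ω | UniformCauchySeqOn (fun k t => X k t ω) atTop (Icc 0 T)}
  have hG : MeasurableSet[F 0] G := by
    simpa only [compl_compl] using (hnull Gᶜ (ae_iff.1 hcau)).compl
  obtain ⟨S, hS, hSc, hlim⟩ := exists_adaptedOn_cadlagOn_of_uniformCauchySeqOn
    (X := fun k t => G.indicator (X k t))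
    (fun k t ht => (hX k t ht).indicator (F.mono ht.1 _ hG))
    (fun k ω => by by_cases hω : ω ∈ G <;> simp [hω, hXc k ω, cadlagOn_const])
    (fun ω => by
      by_cases hω : ω ∈ G
      · simp only [indicator_of_mem hω]
        exact hω
      · simp only [indicator_of_notMem hω]
        exact fun u hu => Eventually.of_forall fun _ _ _ => refl_mem_uniformity hu)
  exact ⟨S, hS, hSc, hcau.mono fun ω hω t ht => by simpa [G, hω] using hlim ω t ht⟩

/-- Borel–Cantelli with the maximal inequality: `sup_t |Y_k - Y_{k+1}| ≤ 2^{-k}` fails with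
probability at most `2^{-k}`. -/
theorem ae_uniformCauchySeqOn_of_eLpNorm_sub_le {μ : Measure Ω} (hT : 0 ≤ T)
    {Y : ℕ → ℝ → Ω → ℝ} (hY : ∀ k, AdaptedOn F T (Y k))
    (hright : ∀ k ω, ∀ t ∈ Ico 0 T, Tendsto (fun s => Y k s ω) (𝓝[>] t) (𝓝 (Y k t ω)))
    (hstep : ∀ k τ, StoppingTimeIn F T τ →
      eLpNorm (fun ω => Y k (τ ω) ω - Y (k + 1) (τ ω) ω) 1 μ ≤ ENNReal.ofReal (4⁻¹ ^ k)) :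
    ∀ᵐ ω ∂μ, UniformCauchySeqOn (fun k t => Y k t ω) atTop (Icc 0 T) := by
  set B : ℕ → Set Ω := fun k => {ω | ∃ t ∈ Icc 0 T, (2⁻¹ : ℝ) ^ k < |Y k t ω - Y (k + 1) t ω|}
  have hB : ∀ k, μ (B k) ≤ ENNReal.ofReal (2⁻¹ ^ k) := by
    intro k
    have hsq : ENNReal.ofReal ((4 : ℝ)⁻¹ ^ k) =
        ENNReal.ofReal (2⁻¹ ^ k) * ENNReal.ofReal (2⁻¹ ^ k) := by
      rw [← ENNReal.ofReal_mul (by positivity : (0 : ℝ) ≤ 2⁻¹ ^ k), ← mul_pow]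
      norm_num
    refine (ENNReal.mul_le_mul_iff_right (a := ENNReal.ofReal ((2 : ℝ)⁻¹ ^ k))
      (ENNReal.ofReal_pos.2 (by positivity)).ne' ENNReal.ofReal_ne_top).1 ?_
    rw [← hsq]
    exact ofReal_mul_measure_exists_lt_abs_le hT (fun t ht => (hY k t ht).sub (hY (k + 1) t ht))
      (fun ω t ht => (hright k ω t ht).sub (hright (k + 1) ω t ht)) (hstep k) _
  have hsum : ∑' k, μ (B k) ≠ ∞ := by
    have hgeom : ∀ k, ENNReal.ofReal (2⁻¹ ^ k) = 2⁻¹ ^ k := by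
      simp [ENNReal.ofReal_pow, ENNReal.ofReal_inv_of_pos, ENNReal.inv_pow]
    refine ne_top_of_le_ne_top ?_ (ENNReal.tsum_le_tsum hB)
    simp only [hgeom, ENNReal.tsum_geometric_two]
    exact ENNReal.ofNat_ne_top
  filter_upwards [ae_eventually_notMem hsum] with ω hω
  apply uniformCauchySeqOn_of_eventually_dist_le_geometric (r := 2⁻¹) (by norm_num) (by norm_num)
  filter_upwards [hω] with k hk t ht
  simp only [B, mem_ofPred_eq, not_exists, not_and, not_lt] at hk
  exact (Real.dist_eq _ _).trans_le (hk t ht)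

theorem classD_and_eLpNorm_sub_le_of_ae_tendsto {μ : Measure Ω} {R : ℕ → ℝ → Ω → ℝ}
    {S : ℝ → Ω → ℝ} (hD : ∀ n, ClassD F T μ (R n))
    (hcauchy : ∀ ε > 0, ∃ N, ∀ n ≥ N, ∀ m ≥ N, ∀ τ : {τ // StoppingTimeIn F T τ},
      eLpNorm ((fun ω => R n (τ.1 ω) ω) - fun ω => R m (τ.1 ω) ω) 1 μ ≤ ENNReal.ofReal ε)
    {φ : ℕ → ℕ} (hφ : Tendsto φ atTop atTop)
    (hlim : ∀ᵐ ω ∂μ, ∀ t ∈ Icc 0 T, Tendsto (fun k => R (φ k) t ω) atTop (𝓝 (S t ω))) :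
    ClassD F T μ S ∧ ∀ ε > 0, ∃ N, ∀ n ≥ N, ∀ τ : {τ // StoppingTimeIn F T τ},
      eLpNorm ((fun ω => R n (τ.1 ω) ω) - fun ω => S (τ.1 ω) ω) 1 μ ≤ ENNReal.ofReal ε := by
  have hlimτ : ∀ τ : {τ // StoppingTimeIn F T τ},
      ∀ᵐ ω ∂μ, Tendsto (fun k => R (φ k) (τ.1 ω) ω) atTop (𝓝 (S (τ.1 ω) ω)) :=
    fun τ => hlim.mono fun ω hω => hω _ (τ.2.2 ω)
  have hconv := fun ε (hε : 0 < ε) => eLpNorm_sub_le_of_cauchy_of_ae_tendsto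
    (ι := {τ // StoppingTimeIn F T τ}) (fun n => (hD n).1) hcauchy hφ hlimτ hε
  refine ⟨UniformIntegrable.of_forall_eLpNorm_sub_le le_rfl (fun τ =>
    aestronglyMeasurable_of_tendsto_ae atTop (fun k => (hD (φ k)).1 τ) (hlimτ τ))
    fun ε hε => ?_, hconv⟩
  obtain ⟨N, hN⟩ := hconv ε hε
  exact ⟨_, hD N, fun τ => by rw [eLpNorm_sub_comm]; exact hN N le_rfl τ⟩

end Processes

theorem classD_complete_general
    {Ω : Type*} {m : MeasurableSpace Ω} (P : Measure Ω)
    (F : Filtration ℝ m) (T : ℝ) (hT : 0 < T)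
    (hnull : ∀ A : Set Ω, P A = 0 → MeasurableSet[F 0] A)
    (R : ℕ → ℝ → Ω → ℝ)
    (hadapted : ∀ n, AdaptedOn F T (R n))
    (hcadlag : ∀ n ω, CadlagOn T (fun t => R n t ω))
    (hD : ∀ n, ClassD F T P (R n))
    (hcauchy : ∀ ε : ℝ, 0 < ε → ∃ N : ℕ, ∀ n ≥ N, ∀ m' ≥ N,
      ∀ τ : Ω → ℝ, StoppingTimeIn F T τ →
        ∫ ω, |R n (τ ω) ω - R m' (τ ω) ω| ∂P ≤ ε) :
    ∃ S : ℝ → Ω → ℝ,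
      AdaptedOn F T S ∧ (∀ ω, CadlagOn T (fun t => S t ω)) ∧ ClassD F T P S ∧
      ∀ ε : ℝ, 0 < ε → ∃ N : ℕ, ∀ n ≥ N,
        ∀ τ : Ω → ℝ, StoppingTimeIn F T τ →
          ∫ ω, |R n (τ ω) ω - S (τ ω) ω| ∂P ≤ ε := by
  have hint : ∀ n τ, StoppingTimeIn F T τ → Integrable (fun ω => R n (τ ω) ω) P :=
    fun n τ hτ => (hD n).integrable_s12 hτ
  have hcauchy' : ∀ ε > 0, ∃ N, ∀ n ≥ N, ∀ m ≥ N, ∀ τ : {τ // StoppingTimeIn F T τ},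
      eLpNorm ((fun ω => R n (τ.1 ω) ω) - fun ω => R m (τ.1 ω) ω) 1 P ≤ ENNReal.ofReal ε :=
    fun ε hε => (hcauchy ε hε).imp fun N hN n hn m hm τ => by
      rw [eLpNorm_one_eq_ofReal_integral_abs ((hint n τ.1 τ.2).sub (hint m τ.1 τ.2))]
      exact ENNReal.ofReal_le_ofReal (hN n hn m hm τ.1 τ.2)
  obtain ⟨φ, hφ, hφstep⟩ := extraction_forall_of_eventually' fun k =>
    (hcauchy' (4⁻¹ ^ k) (by positivity)).imp fun N hN n hn m hm => hN n hn m (hn.trans hm)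
  obtain ⟨S, hSad, hScad, hlim⟩ := exists_adaptedOn_cadlagOn_of_ae_uniformCauchySeqOn hnull
    (fun k => hadapted (φ k)) (fun k => hcadlag (φ k))
    (ae_uniformCauchySeqOn_of_eLpNorm_sub_le hT.le (fun k => hadapted (φ k))
      (fun k ω => (hcadlag (φ k) ω).1)
      fun k τ hτ => hφstep k (φ (k + 1)) (hφ.monotone k.le_succ) ⟨τ, hτ⟩)
  obtain ⟨hSD, hconv⟩ := classD_and_eLpNorm_sub_le_of_ae_tendsto hD hcauchy' hφ.tendsto_atTop hlim
  refine ⟨S, hSad, hScad, hSD, fun ε hε => (hconv ε hε).imp fun N hN n hn τ hτ => ?_⟩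
  exact integral_abs_le_of_eLpNorm_one_le
    ((hint n τ hτ).aestronglyMeasurable.sub (hSD.1 ⟨τ, hτ⟩)) hε.le (hN n hn ⟨τ, hτ⟩)

/-- **Completeness of the space `D¹`.** A sequence of adapted cadlag class (D) processes
which is Cauchy in the norm `‖y‖ = sup_τ E|y_τ|` converges in that norm to an adapted
cadlag class (D) process. -/
theorem classD_complete
    {Ω : Type*} {m : MeasurableSpace Ω} (P : Measure Ω) [IsProbabilityMeasure P]
    (F : Filtration ℝ m) (T : ℝ) (hT : 0 < T)
    (hright : ∀ t : ℝ, (F t : MeasurableSpace Ω) = ⨅ s ∈ Set.Ioi t, (F s : MeasurableSpace Ω))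
    (hnull : ∀ A : Set Ω, P A = 0 → MeasurableSet[F 0] A)
    (R : ℕ → ℝ → Ω → ℝ)
    (hadapted : ∀ n, AdaptedOn F T (R n))
    (hcadlag : ∀ n ω, CadlagOn T (fun t => R n t ω))
    (hD : ∀ n, ClassD F T P (R n))
    (hcauchy : ∀ ε : ℝ, 0 < ε → ∃ N : ℕ, ∀ n ≥ N, ∀ m' ≥ N,
      ∀ τ : Ω → ℝ, StoppingTimeIn F T τ →
        ∫ ω, |R n (τ ω) ω - R m' (τ ω) ω| ∂P ≤ ε) :
    ∃ S : ℝ → Ω → ℝ,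
      AdaptedOn F T S ∧ (∀ ω, CadlagOn T (fun t => S t ω)) ∧ ClassD F T P S ∧
      ∀ ε : ℝ, 0 < ε → ∃ N : ℕ, ∀ n ≥ N,
        ∀ τ : Ω → ℝ, StoppingTimeIn F T τ →
          ∫ ω, |R n (τ ω) ω - S (τ ω) ω| ∂P ≤ ε :=
  classD_complete_general P F T hT hnull R hadapted hcadlag hD hcauchy
end
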